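/- arXiv:1810.04623 — 2 statements merged into one kernel-verified Lean document; each statement's English description precedes it below -/
import Mathlib

section
/- For every α > 0 and x > 0, the derivative of the standardized call function satisfies χ_α'(x) = (α/√(2π)) · exp(−(α²/8)(x − 1/x)²). -/
open Real Filter Set

noncomputable def stdNormalCDF (x : ℝ) : ℝ :=
  (Real.sqrt (2 * Real.pi))⁻¹ * ∫ t in Set.Iic x, Real.exp (-t ^ 2 / 2)

noncomputable def chi (α x : ℝ) : ℝ :=
  stdNormalCDF (α / 2 * (x - 1 / x)) -
    Real.exp (α ^ 2 / 2) * stdNormalCDF (-(α / 2) * (x + 1 / x))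

/-! The two arguments `u = α/2·(x − 1/x)` and `v = −α/2·(x + 1/x)` of the normal cdf in `χ_α`
satisfy `v² − u² = α²`, so the factor `e^{α²/2}` turns the Gaussian density at `v` into the
density at `u`. Hence `χ_α'(x) = φ(u)·(u' − v') = φ(u)·α`, since `u' − v' = α`. -/

theorem hasDerivAt_integral_Iic {f : ℝ → ℝ} (hf : Continuous f)
    (hfi : MeasureTheory.Integrable f) (x : ℝ) :
    HasDerivAt (fun u => ∫ t in Iic u, f t) (f x) x := by
  have hsplit : (fun u => ∫ t in Iic u, f t) =
      fun u => (∫ t in Iic 0, f t) + ∫ t in (0 : ℝ)..u, f t :=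
    funext fun u =>
      eq_add_of_sub_eq' (intervalIntegral.integral_Iic_sub_Iic hfi.integrableOn hfi.integrableOn)
  rw [hsplit]
  exact ((hf.integral_hasStrictDerivAt 0 x).hasDerivAt).const_add _

theorem integrable_exp_neg_sq_div_two : MeasureTheory.Integrable fun t : ℝ => exp (-t ^ 2 / 2) := by
  convert integrable_exp_neg_mul_sq (by norm_num : (0 : ℝ) < 1 / 2) using 3 with t
  ring

theorem hasDerivAt_stdNormalCDF (x : ℝ) :
    HasDerivAt stdNormalCDF ((√(2 * π))⁻¹ * exp (-x ^ 2 / 2)) x :=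
  (hasDerivAt_integral_Iic (by fun_prop) integrable_exp_neg_sq_div_two x).const_mul _

theorem sq_add_inv_sub_sq_sub_inv {x : ℝ} (hx : x ≠ 0) :
    (x + 1 / x) ^ 2 - (x - 1 / x) ^ 2 = 4 := by
  field_simp
  ring

theorem exp_mul_exp_neg_sq_add_inv (α : ℝ) {x : ℝ} (hx : x ≠ 0) :
    exp (α ^ 2 / 2) * exp (-(-(α / 2) * (x + 1 / x)) ^ 2 / 2) =
      exp (-(α / 2 * (x - 1 / x)) ^ 2 / 2) := by
  rw [← exp_add]
  congr 1
  linear_combination (-α ^ 2 / 8) * sq_add_inv_sub_sq_sub_inv hx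

theorem chi_deriv_general (α : ℝ) (x : ℝ) (hx : 0 < x) :
    HasDerivAt (chi α)
      (α / Real.sqrt (2 * Real.pi) * Real.exp (-(α ^ 2 / 8) * (x - 1 / x) ^ 2)) x := by
  have hinv : HasDerivAt (fun y : ℝ => 1 / y) (-(1 / x ^ 2)) x := by
    simpa only [one_div] using hasDerivAt_inv hx.ne'
  have hu : HasDerivAt (fun y => stdNormalCDF (α / 2 * (y - 1 / y)))
      ((√(2 * π))⁻¹ * exp (-(α / 2 * (x - 1 / x)) ^ 2 / 2) * (α / 2 * (1 - -(1 / x ^ 2)))) x :=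
    (hasDerivAt_stdNormalCDF _).comp x (((hasDerivAt_id x).sub hinv).const_mul _)
  have hv : HasDerivAt (fun y => stdNormalCDF (-(α / 2) * (y + 1 / y)))
      ((√(2 * π))⁻¹ * exp (-(-(α / 2) * (x + 1 / x)) ^ 2 / 2) * (-(α / 2) * (1 + -(1 / x ^ 2)))) x :=
    (hasDerivAt_stdNormalCDF _).comp x (((hasDerivAt_id x).add hinv).const_mul _)
  refine (hu.sub (hv.const_mul (exp (α ^ 2 / 2)))).congr_deriv ?_
  have hdensity :
      exp (-(α ^ 2 / 8) * (x - 1 / x) ^ 2) = exp (-(α / 2 * (x - 1 / x)) ^ 2 / 2) := by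
    congr 1
    ring
  linear_combination (-(hdensity * (α / √(2 * π)))) +
    (√(2 * π))⁻¹ * (α / 2) * (1 - 1 / x ^ 2) * exp_mul_exp_neg_sq_add_inv α hx.ne'

theorem chi_deriv (α : ℝ) (hα : 0 < α) (x : ℝ) (hx : 0 < x) :
    HasDerivAt (chi α)
      (α / Real.sqrt (2 * Real.pi) * Real.exp (-(α ^ 2 / 8) * (x - 1 / x) ^ 2)) x :=
  chi_deriv_general α x hx
end

section
/- For every α > 0 and x > 0, the second derivative of the standardized call function satisfies χ_α''(x) = (α³/(4√(2π))) · exp(−(α²/8)(x − 1/x)²) · (1 − x⁴)/x³. -/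
open Real Filter Set MeasureTheory intervalIntegral

/-!
With `φ = N'` the standard normal density, the chain rule gives
`χ_α' = φ(u) u' - e^{α²/2} φ(v) v'` for `u = α/2·(x - 1/x)`, `v = -α/2·(x + 1/x)`.
Since `v² - u² = α²`, the factor `e^{α²/2}` turns `φ(v)` into `φ(u)`, and `u' - v' = α`,
so `χ_α' = α φ(u)`. Differentiating once more with `φ'(y) = -y φ(y)` gives the claim.
-/

theorem hasDerivAt_integral_Iic_s3 {E : Type*} [NormedAddCommGroup E] [NormedSpace ℝ E]
    [CompleteSpace E] {f : ℝ → E} (hf : Continuous f) (hfi : Integrable f) (y : ℝ) :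
    HasDerivAt (fun z => ∫ t in Iic z, f t) (f y) y := by
  have hsplit : (fun z => ∫ t in Iic z, f t) =
      fun z => (∫ t in Iic 0, f t) + ∫ t in (0 : ℝ)..z, f t := by
    funext z
    rw [← integral_Iic_sub_Iic hfi.integrableOn hfi.integrableOn, add_sub_cancel]
  rw [hsplit]
  exact (integral_hasDerivAt_right (hf.intervalIntegrable 0 y)
    (hf.stronglyMeasurableAtFilter _ _) hf.continuousAt).const_add _

noncomputable def stdNormalPDF (y : ℝ) : ℝ :=
  (Real.sqrt (2 * Real.pi))⁻¹ * Real.exp (-y ^ 2 / 2)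

theorem hasDerivAt_stdNormalCDF_s3 (y : ℝ) : HasDerivAt stdNormalCDF (stdNormalPDF y) y := by
  have hint : Integrable fun t : ℝ => Real.exp (-t ^ 2 / 2) := by
    convert integrable_exp_neg_mul_sq (b := 1 / 2) (by norm_num) using 3 with t
    ring
  exact (hasDerivAt_integral_Iic_s3 (by fun_prop) hint y).const_mul _

theorem hasDerivAt_stdNormalPDF (y : ℝ) :
    HasDerivAt stdNormalPDF (-y * stdNormalPDF y) y := by
  have h := (((hasDerivAt_pow 2 y).neg.div_const 2).exp).const_mul (Real.sqrt (2 * Real.pi))⁻¹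
  refine HasDerivAt.congr_deriv (f := stdNormalPDF) h ?_
  simp only [stdNormalPDF, Pi.neg_apply]
  push_cast
  ring

theorem exp_mul_stdNormalPDF_eq (α : ℝ) {x : ℝ} (hx : x ≠ 0) :
    Real.exp (α ^ 2 / 2) * stdNormalPDF (-(α / 2) * (x + 1 / x)) =
      stdNormalPDF (α / 2 * (x - 1 / x)) := by
  unfold stdNormalPDF
  rw [mul_left_comm, ← Real.exp_add]
  congr 2
  field_simp
  ring

theorem hasDerivAt_chi (α : ℝ) {x : ℝ} (hx : x ≠ 0) :
    HasDerivAt (chi α) (α * stdNormalPDF (α / 2 * (x - 1 / x))) x := by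
  have hinv : HasDerivAt (fun x : ℝ => 1 / x) (-(1 / x ^ 2)) x := by
    simpa only [one_div] using hasDerivAt_inv hx
  have hu := (hasDerivAt_stdNormalCDF_s3 (α / 2 * (x - 1 / x))).comp x
    (((hasDerivAt_id x).sub hinv).const_mul (α / 2))
  have hv := ((hasDerivAt_stdNormalCDF_s3 (-(α / 2) * (x + 1 / x))).comp x
    (((hasDerivAt_id x).add hinv).const_mul (-(α / 2)))).const_mul (Real.exp (α ^ 2 / 2))
  refine HasDerivAt.congr_deriv (f := chi α) (hu.sub hv) ?_
  linear_combination (α / 2 * (1 - 1 / x ^ 2)) * exp_mul_stdNormalPDF_eq α hx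

theorem chi_deriv2_general (α : ℝ) (x : ℝ) (hx : 0 < x) :
    HasDerivAt (deriv (chi α))
      (α ^ 3 / (4 * Real.sqrt (2 * Real.pi)) *
        Real.exp (-(α ^ 2 / 8) * (x - 1 / x) ^ 2) * ((1 - x ^ 4) / x ^ 3)) x := by
  have hx0 : x ≠ 0 := hx.ne'
  have hderiv : deriv (chi α) =ᶠ[nhds x] fun y => α * stdNormalPDF (α / 2 * (y - 1 / y)) := by
    filter_upwards [isOpen_ne.mem_nhds hx0] with y hy
    exact (hasDerivAt_chi α hy).deriv
  have hinv : HasDerivAt (fun x : ℝ => 1 / x) (-(1 / x ^ 2)) x := by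
    simpa only [one_div] using hasDerivAt_inv hx0
  have h := ((hasDerivAt_stdNormalPDF (α / 2 * (x - 1 / x))).comp x
    (((hasDerivAt_id x).sub hinv).const_mul (α / 2))).const_mul α
  refine (h.congr_of_eventuallyEq hderiv).congr_deriv ?_
  unfold stdNormalPDF
  rw [show -(α ^ 2 / 8) * (x - 1 / x) ^ 2 = -(α / 2 * (x - 1 / x)) ^ 2 / 2 by ring]
  field_simp
  ring

theorem chi_deriv2 (α : ℝ) (hα : 0 < α) (x : ℝ) (hx : 0 < x) :
    HasDerivAt (deriv (chi α))
      (α ^ 3 / (4 * Real.sqrt (2 * Real.pi)) *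
        Real.exp (-(α ^ 2 / 8) * (x - 1 / x) ^ 2) * ((1 - x ^ 4) / x ^ 3)) x :=
  chi_deriv2_general α x hx
end
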